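/- (Theorem 3.1, left eigenvalue part) Let (H,J,K) and (H̃,J̃,K̃) be two triples of 4×4 real matrices, each satisfying the Hamiltonian conditions (H² = J² = K² = HJK = −E and H̃² = J̃² = K̃² = H̃J̃K̃ = −E), with associated maps Q, P and Q̃, P̃ respectively. Let A, B ∈ ℍ^{m×m} satisfy P(A) = P̃(B), and let λ, γ ∈ ℍ satisfy Q(λ) = Q̃(γ). If λ is a left eigenvalue of A, then γ is a left eigenvalue of B. -/

import Mathlib

open Matrix

/-- The real `4×4` matrix representation of a quaternion determined by matrices
`H, J, K` (assumed to satisfy the Hamiltonian conditions). -/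
noncomputable def qRep (H J K : Matrix (Fin 4) (Fin 4) ℝ) (q : Quaternion ℝ) :
    Matrix (Fin 4) (Fin 4) ℝ :=
  q.re • (1 : Matrix (Fin 4) (Fin 4) ℝ) + q.imI • H + q.imJ • J + q.imK • K

/-- The block real matrix representation of a quaternion matrix: the `(s,t)` block
of `pRep H J K A` is `qRep H J K (A s t)`. -/
noncomputable def pRep (H J K : Matrix (Fin 4) (Fin 4) ℝ) {m n : ℕ}
    (A : Matrix (Fin m) (Fin n) (Quaternion ℝ)) :
    Matrix (Fin m × Fin 4) (Fin n × Fin 4) ℝ :=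
  Matrix.of fun p q => qRep H J K (A p.1 q.1) p.2 q.2

/-- `λ` is a left eigenvalue of `A` if `A v = λ v` for some nonzero `v`. -/
def IsLeftEigenvalue {m : ℕ} (A : Matrix (Fin m) (Fin m) (Quaternion ℝ))
    (l : Quaternion ℝ) : Prop :=
  ∃ v : Fin m → Quaternion ℝ, v ≠ 0 ∧ A.mulVec v = l • v

/-- `λ` is a right eigenvalue of `A` if `A v = v λ` for some nonzero `v`. -/
def IsRightEigenvalue {m : ℕ} (A : Matrix (Fin m) (Fin m) (Quaternion ℝ))
    (l : Quaternion ℝ) : Prop :=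
  ∃ v : Fin m → Quaternion ℝ, v ≠ 0 ∧ A.mulVec v = fun s => v s * l

/-!
Under the Hamiltonian relations `Q` is an `ℝ`-algebra homomorphism `ℍ → ℝ^{4×4}`. Since `ℍ` is a
division algebra, `Q(q)` is invertible for `q ≠ 0`, so for any nonzero `x ∈ ℝ⁴` the map
`q ↦ Q(q) x` is injective, hence by dimension count a linear isomorphism `ℍ ≃ ℝ⁴` turning left
multiplication by `p` into `Q(p)`. Applied blockwise it gives `Φ : ℍ^m ≃ ℝ^{4m}` with
`Φ(A v) = P(A) Φ(v)`. So `A v = λ v` reads `P(A) Φ(v) = P(λ E) Φ(v)`, which is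
`P̃(B) Φ̃(u) = P̃(γ E) Φ̃(u)` for `u = Φ̃⁻¹ Φ(v)`, i.e. `B u = γ u`.
-/

section Hamilton

variable {R : Type*} [Ring R] {H J K : R}

theorem mul_eq_of_mul_mul_eq_neg_one (hK : K * K = -1) (hHJK : H * J * K = -1) : H * J = K := by
  have h : H * J * K * K = -K := by rw [hHJK, neg_one_mul]
  rwa [mul_assoc (H * J), hK, mul_neg_one, neg_inj] at h

theorem mul_eq_neg_of_hamilton (hH : H * H = -1) (hJ : J * J = -1) (hK : K * K = -1)
    (hHJK : H * J * K = -1) : J * H = -K := by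
  have hHJ := mul_eq_of_mul_mul_eq_neg_one hK hHJK
  -- `(H H) (J H) (J J) = H (H J) (H J) J = H (K K) J` reads `J H = -H J`.
  have h : H * H * (J * H) * (J * J) = H * (K * K) * J := by rw [← hHJ]; noncomm_ring
  rw [hH, hJ, hK] at h
  rw [← hHJ]
  simpa using h

variable {S : Type*} [CommRing S] [Algebra S R]

def hamiltonBasis (hH : H * H = -1) (hJ : J * J = -1) (hK : K * K = -1)
    (hHJK : H * J * K = -1) : QuaternionAlgebra.Basis R (-1 : S) 0 (-1) where
  i := H
  j := J
  k := K
  i_mul_i := by simp [hH]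
  j_mul_j := by simp [hJ]
  i_mul_j := mul_eq_of_mul_mul_eq_neg_one hK hHJK
  j_mul_i := by simp [mul_eq_neg_of_hamilton hH hJ hK hHJK]

end Hamilton

section OrbitMap

open Module

variable {R D : Type*} [Field R] [DivisionRing D] [Algebra R D]
  {n : Type*} [Fintype n] [DecidableEq n] (ρ : D →ₐ[R] Matrix n n R) (x : n → R)

def orbitMap : D →ₗ[R] n → R where
  toFun q := ρ q *ᵥ x
  map_add' p q := by rw [map_add, add_mulVec]
  map_smul' r q := by rw [map_smul, smul_mulVec, RingHom.id_apply]

theorem orbitMap_mul (p q : D) : orbitMap ρ x (p * q) = ρ p *ᵥ orbitMap ρ x q := by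
  simp [orbitMap, mulVec_mulVec]

variable {x}

theorem orbitMap_injective (hx : x ≠ 0) : Function.Injective (orbitMap ρ x) := by
  refine (injective_iff_map_eq_zero _).2 fun q hq => by_contra fun hq0 => hx ?_
  calc x = orbitMap ρ x (q⁻¹ * q) := by simp [inv_mul_cancel₀ hq0, orbitMap]
    _ = 0 := by rw [orbitMap_mul, hq, mulVec_zero]

variable [FiniteDimensional R D]

noncomputable def orbitEquiv (hx : x ≠ 0) (hdim : finrank R D = Fintype.card n) :
    D ≃ₗ[R] n → R :=
  LinearEquiv.ofBijective (orbitMap ρ x)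
    ⟨orbitMap_injective ρ hx, (LinearMap.injective_iff_surjective_of_finrank_eq_finrank
      (by simpa using hdim)).1 (orbitMap_injective ρ hx)⟩

noncomputable def blockOrbitEquiv (hx : x ≠ 0) (hdim : finrank R D = Fintype.card n) (m : Type*) :
    (m → D) ≃ₗ[R] m × n → R :=
  (LinearEquiv.piCongrRight fun _ => orbitEquiv ρ hx hdim).trans (LinearEquiv.curry R R m n).symm

@[simp]
theorem blockOrbitEquiv_apply (hx : x ≠ 0) (hdim : finrank R D = Fintype.card n)
    {m : Type*} (v : m → D) (s : m) (i : n) :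
    blockOrbitEquiv ρ hx hdim m v (s, i) = orbitMap ρ x (v s) i :=
  rfl

theorem comp_map_mulVec_blockOrbitEquiv (hx : x ≠ 0) (hdim : finrank R D = Fintype.card n)
    {m m' : Type*} [Fintype m] (A : Matrix m' m D) (v : m → D) :
    comp m' m n n R (A.map ρ) *ᵥ blockOrbitEquiv ρ hx hdim m v =
      blockOrbitEquiv ρ hx hdim m' (A *ᵥ v) := by
  ext ⟨s, i⟩
  simp only [mulVec, dotProduct, Fintype.sum_prod_type, comp_apply, map_apply,
    blockOrbitEquiv_apply, map_sum, orbitMap_mul, Finset.sum_apply]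

end OrbitMap

section QuaternionRep

variable {H J K : Matrix (Fin 4) (Fin 4) ℝ} (hH : H * H = -1) (hJ : J * J = -1)
  (hK : K * K = -1) (hHJK : H * J * K = -1)

noncomputable def qRepAlgHom : Quaternion ℝ →ₐ[ℝ] Matrix (Fin 4) (Fin 4) ℝ :=
  (hamiltonBasis hH hJ hK hHJK).liftHom

theorem qRepAlgHom_apply (q : Quaternion ℝ) : qRepAlgHom hH hJ hK hHJK q = qRep H J K q := by
  change (hamiltonBasis hH hJ hK hHJK).lift q = _
  simp [QuaternionAlgebra.Basis.lift, hamiltonBasis, qRep, Algebra.algebraMap_eq_smul_one]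

theorem pRep_eq_comp_map {m n : ℕ} (A : Matrix (Fin m) (Fin n) (Quaternion ℝ)) :
    pRep H J K A = comp _ _ _ _ ℝ (A.map (qRepAlgHom hH hJ hK hHJK)) := by
  ext
  simp [pRep, qRepAlgHom_apply]

/-- The vector counterpart of `pRep`: block `s` of `pVecEquiv v` is `qRep H J K (v s) *ᵥ e₀`. -/
noncomputable def pVecEquiv (m : ℕ) : (Fin m → Quaternion ℝ) ≃ₗ[ℝ] Fin m × Fin 4 → ℝ :=
  blockOrbitEquiv (qRepAlgHom hH hJ hK hHJK) (x := Pi.single 0 1) (by simp)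
    (by simp [Quaternion.finrank_eq_four]) (Fin m)

theorem pRep_mulVec_pVecEquiv {m m' : ℕ} (A : Matrix (Fin m') (Fin m) (Quaternion ℝ))
    (v : Fin m → Quaternion ℝ) :
    pRep H J K A *ᵥ pVecEquiv hH hJ hK hHJK m v = pVecEquiv hH hJ hK hHJK m' (A *ᵥ v) := by
  rw [pRep_eq_comp_map hH hJ hK hHJK]
  exact comp_map_mulVec_blockOrbitEquiv _ _ _ A v

end QuaternionRep

theorem qRep_zero (H J K : Matrix (Fin 4) (Fin 4) ℝ) : qRep H J K 0 = 0 := by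
  simp [qRep, Quaternion.re_zero, Quaternion.imI_zero, Quaternion.imJ_zero, Quaternion.imK_zero]

theorem pRep_smul_one_eq {H J K H' J' K' : Matrix (Fin 4) (Fin 4) ℝ} {l g : Quaternion ℝ}
    (hlg : qRep H J K l = qRep H' J' K' g) (m : ℕ) :
    pRep H J K (l • (1 : Matrix (Fin m) (Fin m) (Quaternion ℝ))) = pRep H' J' K' (g • 1) := by
  ext ⟨s, i⟩ ⟨t, j⟩
  rcases eq_or_ne s t with rfl | hst
  · simp [pRep, hlg]
  · simp only [pRep, of_apply, Matrix.smul_apply, one_apply_ne hst, smul_zero, qRep_zero,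
      Matrix.zero_apply]

/-- Theorem 3.1, left part: if `P(A) = P̃(B)` and `Q(λ) = Q̃(γ)`
for two Hamiltonian triples, then left eigenvalues correspond. -/
theorem left_eigenvalue_of_pRep_eq
    (H J K H' J' K' : Matrix (Fin 4) (Fin 4) ℝ)
    (hH : H * H = -1) (hJ : J * J = -1) (hK : K * K = -1)
    (hHJK : H * J * K = -1)
    (hH' : H' * H' = -1) (hJ' : J' * J' = -1) (hK' : K' * K' = -1)
    (hHJK' : H' * J' * K' = -1) {m : ℕ}
    (A B : Matrix (Fin m) (Fin m) (Quaternion ℝ))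
    (hAB : pRep H J K A = pRep H' J' K' B)
    (l g : Quaternion ℝ) (hlg : qRep H J K l = qRep H' J' K' g)
    (h : IsLeftEigenvalue A l) : IsLeftEigenvalue B g := by
  obtain ⟨v, hv0, hAv⟩ := h
  let Φ := pVecEquiv hH hJ hK hHJK m
  let Φ' := pVecEquiv hH' hJ' hK' hHJK' m
  obtain ⟨u, hu⟩ := Φ'.surjective (Φ v)
  refine ⟨u, ?_, Φ'.injective ?_⟩
  · rintro rfl
    exact hv0 (by simpa using hu.symm)
  calc Φ' (B *ᵥ u) = pRep H' J' K' B *ᵥ Φ' u := (pRep_mulVec_pVecEquiv _ _ _ _ B u).symm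
    _ = pRep H J K A *ᵥ Φ v := by rw [hAB, hu]
    _ = Φ (l • v) := by rw [pRep_mulVec_pVecEquiv, hAv]
    _ = pRep H J K (l • 1) *ᵥ Φ v := by rw [pRep_mulVec_pVecEquiv, smul_mulVec, one_mulVec]
    _ = pRep H' J' K' (g • 1) *ᵥ Φ' u := by rw [pRep_smul_one_eq hlg, hu]
    _ = Φ' (g • u) := by rw [pRep_mulVec_pVecEquiv, smul_mulVec, one_mulVec]
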